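/- If P and Q are disjoint lattice polytopes contained in [0,k]^d, then d(P,Q) ≥ ε(m,k), where m = dim(aff(P ∪ Q)) is the dimension of the affine hull of P ∪ Q and ε(m,k) is the minimal distance between two disjoint lattice polytopes in [0,k]^m. -/

import Mathlib

/-- A lattice (d,k)-polytope: the convex hull of a finite nonempty set of integer
points contained in the hypercube [0,k]^d. -/
def IsLatticePolytope (d k : ℕ) (P : Set (EuclideanSpace ℝ (Fin d))) : Prop :=
  ∃ V : Finset (EuclideanSpace ℝ (Fin d)), V.Nonempty ∧
    (∀ v ∈ V, ∀ i, (∃ z : ℤ, v i = z) ∧ 0 ≤ v i ∧ v i ≤ k) ∧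
    P = convexHull ℝ (V : Set (EuclideanSpace ℝ (Fin d)))

/-- ε(m,k): the smallest possible distance between two disjoint lattice
(m,k)-polytopes. -/
noncomputable def eps (m k : ℕ) : ℝ :=
  sInf {r | ∃ P Q : Set (EuclideanSpace ℝ (Fin m)),
    IsLatticePolytope m k P ∧ IsLatticePolytope m k Q ∧ P ∩ Q = ∅ ∧
    r = sInf (Set.image2 dist P Q)}

/-!
Pick `m = dim W` coordinates that separate the points of the direction `W` of `aff(P ∪ Q)`.
Forgetting the other coordinates maps lattice `(d,k)`-polytopes to lattice `(m,k)`-polytopes,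
does not increase distances, and is injective on `aff(P ∪ Q)`, so the images of `P` and `Q`
stay disjoint and `ε(m,k) ≤ d(π P, π Q) ≤ d(P,Q)`.
-/

open Module Set

theorem Module.Dual.exists_injective_fin_finrank_separating {K V ι : Type*} [Field K]
    [AddCommGroup V] [Module K V] [FiniteDimensional K V] (f : ι → Dual K V)
    (hf : ∀ v, (∀ i, f i v = 0) → v = 0) :
    ∃ σ : Fin (finrank K V) → ι, Function.Injective σ ∧
      ∀ v, (∀ j, f (σ j) v = 0) → v = 0 := by
  have hspan : Submodule.span K (range f) = ⊤ :=
    Submodule.span_eq_top_of_ne_zero fun v hv => by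
      by_contra! h
      exact hv (hf v fun i => h _ ⟨i, rfl⟩)
  obtain ⟨κ, a, ha, hspan_a, hli⟩ := exists_linearIndependent' K f
  let b : Basis κ K (Dual K V) := .mk hli (by rw [hspan_a, hspan])
  have : Fintype κ := @Fintype.ofFinite _ (Module.Finite.finite_basis b)
  let e : Fin (finrank K V) ≃ κ :=
    (Fintype.equivFinOfCardEq (by rw [← finrank_eq_card_basis b, Subspace.dual_finrank_eq])).symm
  refine ⟨a ∘ e, ha.comp e.injective, fun v hv => hf v fun i => ?_⟩
  have hle : Submodule.span K (range (f ∘ a)) ≤ LinearMap.ker (Dual.eval K V v) :=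
    Submodule.span_le.2 <| by
      rintro _ ⟨c, rfl⟩
      simpa using hv (e.symm c)
  exact hle (hspan_a ▸ Submodule.subset_span ⟨i, rfl⟩)

theorem LinearMap.injOn_of_eq_zero_of_mem_direction {R V W : Type*} [Ring R] [AddCommGroup V]
    [Module R V] [AddCommGroup W] [Module R W] (f : V →ₗ[R] W) {s : AffineSubspace R V}
    (hf : ∀ v ∈ s.direction, f v = 0 → v = 0) : InjOn f s := by
  intro p hp q hq hpq
  exact sub_eq_zero.1 <| hf (p - q) (s.vsub_mem_direction hp hq) (by rw [map_sub, hpq, sub_self])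

theorem sInf_image2_dist_image_le {α β : Type*} [PseudoMetricSpace α] [PseudoMetricSpace β]
    {f : α → β} (hf : ∀ x y, dist (f x) (f y) ≤ dist x y) {s t : Set α}
    (hs : s.Nonempty) (ht : t.Nonempty) :
    sInf (image2 dist (f '' s) (f '' t)) ≤ sInf (image2 dist s t) := by
  refine le_csInf (hs.image2 ht) (forall_mem_image2.2 fun x hx y hy => ?_)
  refine (csInf_le ⟨0, forall_mem_image2.2 fun _ _ _ _ => dist_nonneg⟩ ?_).trans (hf x y)
  exact mem_image2_of_mem (mem_image_of_mem f hx) (mem_image_of_mem f hy)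

namespace EuclideanSpace

def restrictCoords {d m : ℕ} (σ : Fin m → Fin d) :
    EuclideanSpace ℝ (Fin d) →ₗ[ℝ] EuclideanSpace ℝ (Fin m) where
  toFun x := WithLp.toLp 2 fun j => x (σ j)
  map_add' _ _ := rfl
  map_smul' _ _ := rfl

theorem exists_restrictCoords_separating {d : ℕ}
    (W : Submodule ℝ (EuclideanSpace ℝ (Fin d))) :
    ∃ σ : Fin (finrank ℝ W) → Fin d, Function.Injective σ ∧
      ∀ w ∈ W, restrictCoords σ w = 0 → w = 0 := by
  obtain ⟨σ, hσ, hsep⟩ := Dual.exists_injective_fin_finrank_separating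
    (fun i => projₗ (𝕜 := ℝ) i ∘ₗ W.subtype)
    fun w hw => Subtype.ext (PiLp.ext fun i => hw i)
  exact ⟨σ, hσ, fun w hw h => congrArg Subtype.val <|
    hsep ⟨w, hw⟩ fun j => congrFun (congrArg WithLp.ofLp h) j⟩

theorem dist_restrictCoords_le {d m : ℕ} {σ : Fin m → Fin d} (hσ : Function.Injective σ)
    (x y : EuclideanSpace ℝ (Fin d)) :
    dist (restrictCoords σ x) (restrictCoords σ y) ≤ dist x y := by
  rw [dist_eq, dist_eq]
  refine Real.sqrt_le_sqrt ?_
  calc ∑ j, dist (x (σ j)) (y (σ j)) ^ 2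
      = ∑ i ∈ Finset.univ.image σ, dist (x i) (y i) ^ 2 := by
        rw [Finset.sum_image fun _ _ _ _ h => hσ h]
    _ ≤ ∑ i, dist (x i) (y i) ^ 2 :=
      Finset.sum_le_sum_of_subset_of_nonneg (Finset.subset_univ _) fun _ _ _ => sq_nonneg _

end EuclideanSpace

namespace IsLatticePolytope

theorem nonempty {d k : ℕ} {P : Set (EuclideanSpace ℝ (Fin d))}
    (hP : IsLatticePolytope d k P) : P.Nonempty := by
  obtain ⟨V, hV, -, rfl⟩ := hP
  exact (Finset.coe_nonempty.2 hV).mono (subset_convexHull ℝ _)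

theorem image_restrictCoords {d m k : ℕ} {P : Set (EuclideanSpace ℝ (Fin d))}
    (hP : IsLatticePolytope d k P) (σ : Fin m → Fin d) :
    IsLatticePolytope m k (EuclideanSpace.restrictCoords σ '' P) := by
  obtain ⟨V, hV, hVlat, rfl⟩ := hP
  refine ⟨V.image (EuclideanSpace.restrictCoords σ), hV.image _, ?_, ?_⟩
  · simp only [Finset.mem_image, forall_exists_index, and_imp, forall_apply_eq_imp_iff₂]
    exact fun v hv j => hVlat v hv (σ j)
  · rw [LinearMap.image_convexHull, Finset.coe_image]

theorem eps_le_sInf_dist {m k : ℕ} {A B : Set (EuclideanSpace ℝ (Fin m))}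
    (hA : IsLatticePolytope m k A) (hB : IsLatticePolytope m k B) (hAB : A ∩ B = ∅) :
    eps m k ≤ sInf (image2 dist A B) := by
  refine csInf_le ⟨0, ?_⟩ ⟨A, B, hA, hB, hAB, rfl⟩
  rintro _ ⟨A, B, -, -, -, rfl⟩
  exact Real.sInf_nonneg (forall_mem_image2.2 fun _ _ _ _ => dist_nonneg)

end IsLatticePolytope

theorem stmt_7_general (d k : ℕ)
    (P Q : Set (EuclideanSpace ℝ (Fin d)))
    (hP : IsLatticePolytope d k P) (hQ : IsLatticePolytope d k Q)
    (hdisj : P ∩ Q = ∅) :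
    eps (Module.finrank ℝ (affineSpan ℝ (P ∪ Q)).direction) k
      ≤ sInf (Set.image2 dist P Q) := by
  obtain ⟨σ, hσ, hsep⟩ :=
    EuclideanSpace.exists_restrictCoords_separating (affineSpan ℝ (P ∪ Q)).direction
  set π := EuclideanSpace.restrictCoords σ
  have hinj : InjOn π (P ∪ Q) :=
    (π.injOn_of_eq_zero_of_mem_direction hsep).mono (subset_affineSpan ℝ _)
  have hdisj' : π '' P ∩ π '' Q = ∅ := by
    rw [← hinj.image_inter subset_union_left subset_union_right, hdisj, image_empty]
  calc eps _ k ≤ sInf (image2 dist (π '' P) (π '' Q)) :=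
        (hP.image_restrictCoords σ).eps_le_sInf_dist (hQ.image_restrictCoords σ) hdisj'
    _ ≤ sInf (image2 dist P Q) :=
        sInf_image2_dist_image_le (EuclideanSpace.dist_restrictCoords_le hσ) hP.nonempty
          hQ.nonempty

/-- If P and Q are disjoint lattice (d,k)-polytopes, then
d(P,Q) ≥ ε(m,k) where m = dim(aff(P ∪ Q)). -/
theorem stmt_7 (d k : ℕ) (hd : 1 ≤ d) (hk : 1 ≤ k)
    (P Q : Set (EuclideanSpace ℝ (Fin d)))
    (hP : IsLatticePolytope d k P) (hQ : IsLatticePolytope d k Q)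
    (hdisj : P ∩ Q = ∅) :
    eps (Module.finrank ℝ (affineSpan ℝ (P ∪ Q)).direction) k
      ≤ sInf (Set.image2 dist P Q) :=
  stmt_7_general d k P Q hP hQ hdisj
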